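/- arXiv:2001.09402 — 5 statements merged into one kernel-verified Lean document; each statement's English description precedes it below -/
import Mathlib

section
/- Let q ≥ 2 and let k_1 ≤ k_2 ≤ ⋯ ≤ k_m be positive integers with k_1 ≥ log_q(m) (equivalently m ≤ q^{k_1}). Then (q^{k_1}−1)(q^{k_2}−1)⋯(q^{k_m}−1) ≥ q^{k_1+k_2+⋯+k_m−2}. -/
/-!
Put `a = q ^ k₁`. Since `q ^ kᵢ - 1 ≥ (a - 1) q ^ (kᵢ - k₁)`, the product is at least
`(a - 1) ^ m q ^ (∑ kᵢ - m k₁) = (1 - 1/a) ^ m q ^ (∑ kᵢ)`, and for `m ≤ a` we have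
`(a / (a - 1)) ^ m ≤ (1 + 1/(a - 1)) ^ a ≤ 4 ≤ q ^ 2`, because `(1 + 1/n) ^ (n + 1)`
decreases.
-/

open Finset

/-- With `u = 1 + 1/n`, `v = 1 + 1/(n+1)` and `w = 1 + 1/(n(n+2))` we have `u = v w`, and
Bernoulli's inequality gives `w ^ (n + 2) ≥ u`. -/
theorem one_add_inv_succ_pow_le (n : ℕ) (hn : 0 < n) :
    (1 + ((n + 1 : ℕ) : ℝ)⁻¹) ^ (n + 1 + 1) ≤ (1 + (n : ℝ)⁻¹) ^ (n + 1) := by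
  have hn' : (0 : ℝ) < n := by exact_mod_cast hn
  set u : ℝ := 1 + (n : ℝ)⁻¹
  set v : ℝ := 1 + ((n + 1 : ℕ) : ℝ)⁻¹
  set w : ℝ := 1 + (n * (n + 2) : ℝ)⁻¹
  have hu : 0 < u := by positivity
  have huvw : u = v * w := by
    simp only [u, v, w]; push_cast; field_simp; ring
  have hbern : u ≤ w ^ (n + 2) := by
    calc u = 1 + ((n + 2 : ℕ) : ℝ) * (n * (n + 2) : ℝ)⁻¹ := by
            simp only [u]; push_cast; field_simp
      _ ≤ w ^ (n + 2) := by
            refine one_add_mul_le_pow ?_ _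
            linarith [inv_pos.2 (by positivity : (0 : ℝ) < n * (n + 2))]
  have hmul : v ^ (n + 2) * u ≤ u ^ (n + 1) * u := by
    calc v ^ (n + 2) * u ≤ v ^ (n + 2) * w ^ (n + 2) := by gcongr
      _ = u ^ (n + 1) * u := by rw [← mul_pow, ← huvw, pow_succ]
  exact le_of_mul_le_mul_right hmul hu

theorem antitoneOn_one_add_inv_pow_succ :
    AntitoneOn (fun n : ℕ => (1 + (n : ℝ)⁻¹) ^ (n + 1)) {n | 1 ≤ n} :=
  antitoneOn_nat_Ici_of_succ_le fun n hn => one_add_inv_succ_pow_le n hn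

theorem succ_pow_le_four_mul_pow {b m : ℕ} (hb : 0 < b) (hm : m ≤ b + 1) :
    (b + 1) ^ m ≤ 4 * b ^ m := by
  have hb' : (0 : ℝ) < b := by exact_mod_cast hb
  have hratio : (b + 1 : ℝ) / b = 1 + (b : ℝ)⁻¹ := by field_simp
  have hle : ((b + 1 : ℝ) / b) ^ m ≤ 4 :=
    calc ((b + 1 : ℝ) / b) ^ m ≤ ((b + 1 : ℝ) / b) ^ (b + 1) :=
          pow_le_pow_right₀ (by rw [le_div_iff₀ hb']; linarith) hm
      _ = (1 + (b : ℝ)⁻¹) ^ (b + 1) := by rw [hratio]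
      _ ≤ (1 + ((1 : ℕ) : ℝ)⁻¹) ^ (1 + 1) :=
          antitoneOn_one_add_inv_pow_succ (le_refl 1) hb hb
      _ = 4 := by norm_num
  rw [div_pow, div_le_iff₀ (by positivity)] at hle
  exact_mod_cast hle

theorem sub_one_mul_pow_sub_le_pow_sub_one {q t k : ℕ} (hq : 0 < q) (htk : t ≤ k) :
    (q ^ t - 1) * q ^ (k - t) ≤ q ^ k - 1 := by
  rw [Nat.sub_mul, one_mul, ← pow_add, Nat.add_sub_cancel' htk]
  exact Nat.sub_le_sub_left (Nat.one_le_pow _ _ hq) _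

theorem pow_sum_le_sq_mul_prod_pow_sub_one {ι : Type*} [Fintype ι] {q t : ℕ} (k : ι → ℕ)
    (hq : 2 ≤ q) (ht : 0 < t) (hk : ∀ i, t ≤ k i) (hcard : Fintype.card ι ≤ q ^ t) :
    q ^ (∑ i, k i) ≤ q ^ 2 * ∏ i, (q ^ k i - 1) := by
  have hqt : 2 ≤ q ^ t := hq.trans (Nat.le_self_pow ht.ne' q)
  have hsum : ∑ i, k i = ∑ i, (k i - t) + Fintype.card ι * t := by
    rw [← smul_eq_mul, ← card_univ, ← sum_const, ← sum_add_distrib]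
    exact sum_congr rfl fun i _ => (Nat.sub_add_cancel (hk i)).symm
  have hfour : (q ^ t) ^ Fintype.card ι ≤ 4 * (q ^ t - 1) ^ Fintype.card ι := by
    simpa [Nat.sub_add_cancel (by omega : 1 ≤ q ^ t)] using
      succ_pow_le_four_mul_pow (b := q ^ t - 1) (by omega) (by omega)
  calc q ^ (∑ i, k i) = (q ^ t) ^ Fintype.card ι * q ^ (∑ i, (k i - t)) := by
        rw [hsum, pow_add, ← pow_mul, mul_comm t, mul_comm]
    _ ≤ 4 * (q ^ t - 1) ^ Fintype.card ι * q ^ (∑ i, (k i - t)) := by gcongr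
    _ ≤ q ^ 2 * ((q ^ t - 1) ^ Fintype.card ι * q ^ (∑ i, (k i - t))) := by
        rw [← mul_assoc]; gcongr; nlinarith
    _ = q ^ 2 * ∏ i, ((q ^ t - 1) * q ^ (k i - t)) := by
        rw [prod_mul_distrib, prod_const, card_univ, prod_pow_eq_pow_sum]
    _ ≤ q ^ 2 * ∏ i, (q ^ k i - 1) := by
        gcongr with i
        exact sub_one_mul_pow_sub_le_pow_sub_one (by omega) (hk i)

theorem pow_sub_le_of_pow_le_pow_mul {q S d P : ℕ} (hq : 0 < q) (hP : 0 < P)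
    (h : q ^ S ≤ q ^ d * P) : q ^ (S - d) ≤ P := by
  rcases le_total d S with hdS | hSd
  · rw [← Nat.pow_div hdS hq]
    exact Nat.div_le_of_le_mul h
  · rw [Nat.sub_eq_zero_of_le hSd, pow_zero]
    exact hP

/-- Let `q ≥ 2` and `k_1 ≤ k_2 ≤ ⋯ ≤ k_m` be positive integers with `m ≤ q^{k_1}`
(i.e. `k_1 ≥ log_q m`). Then `(q^{k_1}−1)⋯(q^{k_m}−1) ≥ q^{k_1+⋯+k_m−2}`. -/
theorem prod_pow_sub_one_ge (q m : ℕ) (hq : 2 ≤ q) (hm : 0 < m)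
    (k : Fin m → ℕ) (hkpos : ∀ i, 0 < k i) (hmono : Monotone k)
    (h : m ≤ q ^ k ⟨0, hm⟩) :
    q ^ (∑ i, k i - 2) ≤ ∏ i, (q ^ k i - 1) := by
  have hk : ∀ i, k ⟨0, hm⟩ ≤ k i := fun i => hmono (Nat.zero_le i)
  have hprod_pos : 0 < ∏ i, (q ^ k i - 1) := prod_pos fun i _ =>
    Nat.sub_pos_of_lt (Nat.one_lt_pow (hkpos i).ne' hq)
  refine pow_sub_le_of_pow_le_pow_mul (by omega) hprod_pos ?_
  exact pow_sum_le_sq_mul_prod_pow_sub_one k hq (hkpos _) hk (by simpa using h)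
end

section
/- Let F be a finite field, M = M₂(F), and E ⊆ M a subalgebra that is a field extension of F of degree 2 containing the identity matrix. If c ∈ M has rank 1, then M·c = E·c, and M·c is a minimal left ideal of M. -/
open Matrix Module LinearMap

set_option synthInstance.maxHeartbeats 400000
set_option maxHeartbeats 1000000

/-- Let `F` be a finite field, `M = M₂(F)`, and `E ⊆ M` a subalgebra which is a field
extension of `F` of degree `2` (containing the identity matrix). If `c ∈ M` has rank `1`,
then `M·c = E·c`, and `M·c` is a minimal left ideal of `M`. -/
theorem Mc_eq_Ec_and_minimal (F : Type*) [Field F] [Fintype F]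
    (E : Subalgebra F (Matrix (Fin 2) (Fin 2) F))
    (hEfield : IsField E) (hEdim : Module.finrank F E = 2)
    (c : Matrix (Fin 2) (Fin 2) F) (hc : c.rank = 1) :
    (∀ x : Matrix (Fin 2) (Fin 2) F,
        (∃ m : Matrix (Fin 2) (Fin 2) F, x = m * c) ↔ (∃ e ∈ E, x = e * c)) ∧
    IsAtom (Submodule.span (Matrix (Fin 2) (Fin 2) F) {c}) := by
  have hc0 : c ≠ 0 := by
    intro h; rw [h, Matrix.rank_zero] at hc; exact one_ne_zero hc.symm
  -- determinant of c is zero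
  have hdet : c.det = 0 := by
    by_contra h
    have := Matrix.rank_of_isUnit c ((Matrix.isUnit_iff_isUnit_det c).2 (Ne.isUnit h))
    rw [hc] at this
    simp [Fintype.card_fin] at this
  -- a nonzero left null vector
  have hdetT : cᵀ.det = 0 := by rwa [Matrix.det_transpose]
  obtain ⟨v, hv0, hv⟩ := (Matrix.exists_mulVec_eq_zero_iff).2 hdetT
  have hvc : v ᵥ* c = 0 := by rwa [← Matrix.mulVec_transpose]
  -- the right-multiplication-by-c linear map
  set L : Matrix (Fin 2) (Fin 2) F →ₗ[F] Matrix (Fin 2) (Fin 2) F := LinearMap.mulRight F c with hL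
  -- the kernel of L contains an injective image of F²
  let φ : (Fin 2 → F) →ₗ[F] Matrix (Fin 2) (Fin 2) F :=
    { toFun := fun a => Matrix.vecMulVec a v
      map_add' := by intro a b; ext i j; simp [Matrix.vecMulVec_apply, Matrix.add_apply, Matrix.smul_apply, smul_eq_mul]; ring
      map_smul' := by intro r a; ext i j; simp [Matrix.vecMulVec_apply, Matrix.add_apply, Matrix.smul_apply, smul_eq_mul]; ring }
  have hφker : ∀ a, φ a ∈ LinearMap.ker L := by
    intro a
    rw [LinearMap.mem_ker]
    show Matrix.vecMulVec a v * c = 0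
    ext i j
    have := congrFun hvc j
    simp only [Matrix.mul_apply, Matrix.vecMulVec_apply, Matrix.zero_apply]
    calc ∑ k, a i * v k * c k j = a i * ∑ k, v k * c k j := by
          rw [Finset.mul_sum]; congr 1; ext k; ring
      _ = 0 := by
          rw [show (∑ k, v k * c k j) = (v ᵥ* c) j from rfl, hvc]; simp
  have hφinj : Function.Injective φ := by
    rw [injective_iff_map_eq_zero]
    intro a ha
    obtain ⟨j, hj⟩ : ∃ j, v j ≠ 0 := by
      by_contra h; push_neg at h; exact hv0 (funext h)
    funext i
    have := congrFun (congrFun ha i) j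
    have : a i * v j = 0 := this
    exact (mul_eq_zero.1 this).resolve_right hj
  -- hence the kernel has dimension at least 2
  have hkerge : 2 ≤ Module.finrank F (LinearMap.ker L) := by
    have := LinearMap.finrank_le_finrank_of_injective
      (f := (LinearMap.codRestrict (LinearMap.ker L) φ hφker))
      (by intro a b hab
          apply hφinj
          simpa using congrArg Subtype.val hab)
    simpa [Module.finrank_fin_fun] using this
  have hranklt : Module.finrank F (LinearMap.range L) ≤ 2 := by
    have h4 : Module.finrank F (Matrix (Fin 2) (Fin 2) F) = 4 := by
      simp [Module.finrank_matrix]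
    have := LinearMap.finrank_range_add_finrank_ker L
    omega
  -- the map from E
  let ψ : E →ₗ[F] Matrix (Fin 2) (Fin 2) F := L.comp (E.val).toLinearMap
  have hψ : ∀ e : E, ψ e = (e : Matrix (Fin 2) (Fin 2) F) * c := fun e => rfl
  have hψinj : Function.Injective ψ := by
    rw [injective_iff_map_eq_zero]
    intro e he
    by_contra he0
    obtain ⟨e', hee'⟩ := hEfield.mul_inv_cancel he0
    have h1 : ((e' : Matrix (Fin 2) (Fin 2) F) * (e : Matrix (Fin 2) (Fin 2) F)) * c = 0 := by
      rw [mul_assoc]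
      rw [hψ e] at he
      rw [he, mul_zero]
    have h2 : (e' : Matrix (Fin 2) (Fin 2) F) * (e : Matrix (Fin 2) (Fin 2) F) = 1 := by
      have h' : e' * e = 1 := by rw [hEfield.mul_comm]; exact hee'
      have := congrArg (Subtype.val) h'
      simpa using this
    rw [h2, one_mul] at h1
    exact hc0 h1
  have hEfd : FiniteDimensional F E := by
    have : FiniteDimensional F (Matrix (Fin 2) (Fin 2) F) := by infer_instance
    exact FiniteDimensional.of_injective (E.val).toLinearMap Subtype.val_injective
  have hψrank : Module.finrank F (LinearMap.range ψ) = 2 := by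
    rw [LinearMap.finrank_range_of_inj hψinj, hEdim]
  have hle : LinearMap.range ψ ≤ LinearMap.range L := LinearMap.range_comp_le_range _ _
  have hrange : LinearMap.range ψ = LinearMap.range L := by
    apply Submodule.eq_of_le_of_finrank_le hle
    rw [hψrank]; exact hranklt
  -- part 1
  have part1 : ∀ x : Matrix (Fin 2) (Fin 2) F, (∃ m : Matrix (Fin 2) (Fin 2) F, x = m * c) ↔ (∃ e ∈ E, x = e * c) := by
    intro x
    constructor
    · rintro ⟨m, rfl⟩
      have : m * c ∈ LinearMap.range L := ⟨m, rfl⟩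
      rw [← hrange] at this
      obtain ⟨e, he⟩ := this
      exact ⟨(e : Matrix (Fin 2) (Fin 2) F), e.2, he.symm⟩
    · rintro ⟨e, _, rfl⟩
      exact ⟨e, rfl⟩
  refine ⟨part1, ?_, ?_⟩
  · -- span M {c} ≠ ⊥
    intro h
    have : c ∈ (⊥ : Submodule (Matrix (Fin 2) (Fin 2) F) (Matrix (Fin 2) (Fin 2) F)) := h ▸ Submodule.mem_span_singleton_self c
    exact hc0 (Submodule.mem_bot (Matrix (Fin 2) (Fin 2) F) |>.1 this)
  · -- minimality
    intro b hb
    by_contra hb0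
    obtain ⟨x, hxb, hx0⟩ := Submodule.exists_mem_ne_zero_of_ne_bot hb0
    have hxspan : x ∈ Submodule.span (Matrix (Fin 2) (Fin 2) F) {c} := hb.le hxb
    obtain ⟨m, hm⟩ := Submodule.mem_span_singleton.1 hxspan
    have hxmc : x = m * c := by rw [← hm, smul_eq_mul]
    obtain ⟨e, heE, hexc⟩ := (part1 x).1 ⟨m, hxmc⟩
    have he0 : (⟨e, heE⟩ : E) ≠ 0 := by
      intro h
      apply hx0
      have : e = 0 := congrArg Subtype.val h
      rw [hexc, this, zero_mul]
    obtain ⟨e', hee'⟩ := hEfield.mul_inv_cancel he0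
    have h2 : (e' : Matrix (Fin 2) (Fin 2) F) * e = 1 := by
      have h' : e' * (⟨e, heE⟩ : E) = 1 := by rw [hEfield.mul_comm]; exact hee'
      have := congrArg (Subtype.val) h'
      simpa using this
    have hcx : c = (e' : Matrix (Fin 2) (Fin 2) F) * x := by
      rw [hexc, ← mul_assoc, h2, one_mul]
    have hcb : c ∈ b := by
      rw [hcx, ← smul_eq_mul]
      exact b.smul_mem _ hxb
    have : Submodule.span (Matrix (Fin 2) (Fin 2) F) {c} ≤ b := by
      rw [Submodule.span_le, Set.singleton_subset_iff]; exact hcb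
    exact absurd (le_antisymm hb.le this) hb.ne
end

section
/- Let F be a finite field, M = M₂(F), E = Fε + Fη ⊆ M a field extension of F of degree 2 (where ε is the identity and η has irreducible characteristic polynomial), and L = E·ε₁₁ = M·ε₁₁ where ε₁₁ is the matrix unit with 1 in position (1,1). Then for 0 ≠ c ∈ L and units a, b ∈ E^×, the equation a·c = c·b holds if and only if a = b and a is a scalar multiple of the identity (a ∈ (Fε)^×). -/
/-!
Since `φ` is irreducible of degree 2 it has no root in `F`, so `x • 1 - η` is invertible for
every `x`; hence every nonzero element of `E = F[η]` is a unit. Writing `c = e ε₁₁` with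
`0 ≠ e ∈ E` and using that `E` is commutative, `a c = c b` becomes `a ε₁₁ = ε₁₁ b` after
cancelling `e`, i.e. `a₁₀ = 0`, `b₀₁ = 0`, `a₀₀ = b₀₀`. As `η₁₀` and `η₀₁` are nonzero
(otherwise `η₀₀` would be an eigenvalue), this forces `a`, `b` to be the same scalar matrix.
-/

namespace Matrix

variable {K : Type*} [Field K]

lemma det_scalar_sub_ne_zero_of_irreducible_charpoly {n : Type*} [Fintype n] [DecidableEq n]
    {η : Matrix n n K} (hη : Irreducible η.charpoly) (hn : Fintype.card n ≠ 1) (x : K) :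
    (scalar n x - η).det ≠ 0 := by
  rw [← eval_charpoly]
  exact hη.not_isRoot_of_natDegree_ne_one (by simpa using hn)

lemma isUnit_smul_one_add_smul_of_irreducible_charpoly {n : Type*} [Fintype n] [DecidableEq n]
    {η : Matrix n n K} (hη : Irreducible η.charpoly) (hn : Fintype.card n ≠ 1) {p q : K}
    (h : p • (1 : Matrix n n K) + q • η ≠ 0) : IsUnit (p • (1 : Matrix n n K) + q • η) := by
  rw [isUnit_iff_isUnit_det, isUnit_iff_ne_zero]
  rcases eq_or_ne q 0 with rfl | hq
  · have hp : p ≠ 0 := by rintro rfl; simp at h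
    simp [hp]
  · have : p • (1 : Matrix n n K) + q • η = (-q) • (scalar n (-p / q) - η) := by
      rw [scalar_apply, smul_sub, ← smul_one_eq_diagonal, smul_smul]
      field_simp
      simp [sub_eq_add_neg]
    rw [this, det_smul]
    exact mul_ne_zero (pow_ne_zero _ (neg_ne_zero.mpr hq))
      (det_scalar_sub_ne_zero_of_irreducible_charpoly hη hn _)

lemma apply_one_zero_ne_zero_of_irreducible_charpoly {η : Matrix (Fin 2) (Fin 2) K}
    (hη : Irreducible η.charpoly) : η 1 0 ≠ 0 := fun h ↦
  det_scalar_sub_ne_zero_of_irreducible_charpoly hη (by simp) (η 0 0) (by simp [det_fin_two, h])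

lemma apply_zero_one_ne_zero_of_irreducible_charpoly {η : Matrix (Fin 2) (Fin 2) K}
    (hη : Irreducible η.charpoly) : η 0 1 ≠ 0 := fun h ↦
  det_scalar_sub_ne_zero_of_irreducible_charpoly hη (by simp) (η 0 0) (by simp [det_fin_two, h])

lemma mul_e11_eq_e11_mul_iff {R : Type*} [Semiring R] (a b : Matrix (Fin 2) (Fin 2) R) :
    a * !![1, 0; 0, 0] = !![1, 0; 0, 0] * b ↔ a 1 0 = 0 ∧ b 0 1 = 0 ∧ a 0 0 = b 0 0 := by
  rw [← ext_iff]
  simp [Fin.forall_fin_two, mul_apply, eq_comm]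
  tauto

end Matrix

lemma commute_smul_one_add_smul {K A : Type*} [CommSemiring K] [Semiring A] [Algebra K A]
    (x : A) (p q r s : K) :
    Commute (p • (1 : A) + q • x) (r • 1 + s • x) := by
  apply_rules [Commute.add_left, Commute.add_right, Commute.smul_left, Commute.smul_right,
    Commute.one_left, Commute.one_right, Commute.refl]

theorem commuting_units_are_central_general (F : Type*) [Field F]
    (η : Matrix (Fin 2) (Fin 2) F) (hη : Irreducible (Matrix.charpoly η))
    (a b c : Matrix (Fin 2) (Fin 2) F)
    (ha : ∃ a₁ a₂ : F, a = a₁ • (1 : Matrix (Fin 2) (Fin 2) F) + a₂ • η) (ha0 : a ≠ 0)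
    (hb : ∃ b₁ b₂ : F, b = b₁ • (1 : Matrix (Fin 2) (Fin 2) F) + b₂ • η)
    (hc : ∃ c₁ c₂ : F,
      c = (c₁ • (1 : Matrix (Fin 2) (Fin 2) F) + c₂ • η) * !![1, 0; 0, 0]) (hc0 : c ≠ 0) :
    a * c = c * b ↔
      (a = b ∧ ∃ s : F, s ≠ 0 ∧ a = s • (1 : Matrix (Fin 2) (Fin 2) F)) := by
  refine ⟨fun h ↦ ?_, fun ⟨hab, s, _, hs⟩ ↦ by
    rw [← hab, hs]
    exact ((Commute.one_left c).smul_left s).eq⟩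
  obtain ⟨a₁, a₂, rfl⟩ := ha
  obtain ⟨b₁, b₂, rfl⟩ := hb
  obtain ⟨c₁, c₂, rfl⟩ := hc
  have he : IsUnit (c₁ • (1 : Matrix (Fin 2) (Fin 2) F) + c₂ • η) :=
    Matrix.isUnit_smul_one_add_smul_of_irreducible_charpoly hη (by simp)
      fun h ↦ hc0 (by rw [h, zero_mul])
  rw [← mul_assoc, (commute_smul_one_add_smul η a₁ a₂ c₁ c₂).eq, mul_assoc, mul_assoc,
    he.mul_right_inj, Matrix.mul_e11_eq_e11_mul_iff] at h
  simp only [Matrix.add_apply, Matrix.smul_apply, Matrix.one_apply_eq,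
    Matrix.one_apply_ne one_ne_zero, Matrix.one_apply_ne zero_ne_one, smul_eq_mul,
    mul_zero, zero_add, mul_one, mul_eq_zero, or_false,
    Matrix.apply_one_zero_ne_zero_of_irreducible_charpoly hη,
    Matrix.apply_zero_one_ne_zero_of_irreducible_charpoly hη] at h
  obtain ⟨rfl, rfl, h⟩ := h
  simp only [zero_mul, add_zero, zero_smul] at h ha0 ⊢
  subst h
  exact ⟨rfl, a₁, fun h ↦ ha0 (by rw [h, zero_smul]), rfl⟩

/-- Let `F` be a finite field, `M = M₂(F)`, `E = Fε + Fη ⊆ M` a degree-2 field extension of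
`F` (where `ε` is the identity and `η` has irreducible characteristic polynomial), and
`L = E·ε₁₁ = M·ε₁₁` with `ε₁₁ = [[1,0],[0,0]]`. Then for `0 ≠ c ∈ L` and units
`a, b ∈ E^×`, one has `a·c = c·b` if and only if `a = b` and `a` is a nonzero scalar
multiple of the identity. -/
theorem commuting_units_are_central (F : Type*) [Field F] [Fintype F]
    (η : Matrix (Fin 2) (Fin 2) F) (hη : Irreducible (Matrix.charpoly η))
    (a b c : Matrix (Fin 2) (Fin 2) F)
    (ha : ∃ a₁ a₂ : F, a = a₁ • (1 : Matrix (Fin 2) (Fin 2) F) + a₂ • η) (ha0 : a ≠ 0)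
    (hb : ∃ b₁ b₂ : F, b = b₁ • (1 : Matrix (Fin 2) (Fin 2) F) + b₂ • η) (hb0 : b ≠ 0)
    (hc : ∃ c₁ c₂ : F,
      c = (c₁ • (1 : Matrix (Fin 2) (Fin 2) F) + c₂ • η) * !![1, 0; 0, 0]) (hc0 : c ≠ 0) :
    a * c = c * b ↔
      (a = b ∧ ∃ s : F, s ≠ 0 ∧ a = s • (1 : Matrix (Fin 2) (Fin 2) F)) :=
  commuting_units_are_central_general F η hη a b c ha ha0 hb hc hc0
end

section
/- Let F be a finite field with |F| = q and let t > q. Define G_t = { primes p : q < p ≤ t and the order of q in (ℤ/pℤ)^× is at least (log_q t)² } and π(t) the number of primes ≤ t. Then lim_{t→∞} |G_t|/π(t) = 1. -/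
/-!
A prime `p > q` with `ord_p(q) < K` divides `∏_{1 ≤ d < K} (q^d - 1) ≤ q^(K²)`, and a product of
such primes is at least `q` to the number of factors, so there are at most `K²` of them. With
`K ≈ (log_q t)²` the exceptional primes number `O((log t)⁴)`, which is `o(π t)` by Chebyshev's
bound `π t ≫ t / log t`.
-/

open Nat hiding log
open Filter Finset Real Asymptotics
open scoped Nat.Prime

theorem dvd_pow_orderOf_natCast_sub_one (n : ℕ) {q : ℕ} (hq : 0 < q) :
    n ∣ q ^ orderOf (q : ZMod n) - 1 := by
  rw [← ZMod.natCast_eq_zero_iff, Nat.cast_sub (Nat.one_le_pow _ _ hq)]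
  simp [pow_orderOf_eq_one]

theorem card_le_sq_of_orderOf_lt {q K : ℕ} (hq : 2 ≤ q) {s : Finset ℕ}
    (hs : ∀ p ∈ s, p.Prime ∧ q < p ∧ orderOf (q : ZMod p) < K) : #s ≤ K ^ 2 := by
  set M := ∏ d ∈ Ico 1 K, (q ^ d - 1)
  have hM : 0 < M := prod_pos fun d hd =>
    Nat.sub_pos_of_lt (Nat.one_lt_pow (Nat.one_le_iff_ne_zero.1 (mem_Ico.1 hd).1) hq)
  have hdvd : ∏ p ∈ s, p ∣ M := by
    refine prod_primes_dvd M (fun p hp => (hs p hp).1.prime) fun p hp => ?_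
    obtain ⟨hp, hqp, hK⟩ := hs p hp
    have := Fact.mk hp
    have hunit : IsUnit (q : ZMod p) := isUnit_iff_ne_zero.2 <| by
      rw [Ne, ZMod.natCast_eq_zero_iff]
      exact Nat.not_dvd_of_pos_of_lt (by omega) hqp
    have hpos := (isOfFinOrder_iff_isUnit.2 hunit).orderOf_pos
    exact (dvd_pow_orderOf_natCast_sub_one p (by omega)).trans
      (dvd_prod_of_mem _ (mem_Ico.2 ⟨hpos, hK⟩))
  have : q ^ #s ≤ q ^ K ^ 2 := calc
    q ^ #s ≤ ∏ p ∈ s, p := pow_card_le_prod _ _ _ fun p hp => (hs p hp).2.1.le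
    _ ≤ M := Nat.le_of_dvd hM hdvd
    _ ≤ (q ^ K) ^ #(Ico 1 K) := prod_le_pow_card _ _ _ fun d hd =>
      (Nat.sub_le _ _).trans (Nat.pow_le_pow_right (by omega) (mem_Ico.1 hd).2.le)
    _ ≤ q ^ K ^ 2 := by
      rw [← pow_mul, sq]
      exact Nat.pow_le_pow_right (by omega) (Nat.mul_le_mul_left _ (by simp))
  exact (Nat.pow_le_pow_iff_right (by omega)).1 this

theorem isBigO_div_log_primeCounting :
    (fun n : ℕ => (n : ℝ) / log n) =O[atTop] (fun n => (π n : ℝ)) := by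
  have hc : 0 < (log 2 - 1 / 2) / 2 := by linarith [log_two_gt_d9]
  have hlog : (fun n : ℕ => log ((n : ℝ) + 1)) =o[atTop] (fun n => (n : ℝ) + 1) :=
    isLittleO_log_id_atTop.comp_tendsto
      (tendsto_atTop_add_const_right _ 1 tendsto_natCast_atTop_atTop)
  -- Chebyshev: `π n * log n ≥ n * log 2 - log (n + 1)`, and eventually `log (n + 1) ≤ (log 2 - 1/2) * n`.
  refine IsBigO.of_bound 2 ?_
  filter_upwards [hlog.bound hc, eventually_ge_atTop 2] with n hn h2
  have hn1 : (1 : ℝ) ≤ n := by exact_mod_cast (by omega : 1 ≤ n)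
  have hlogn : 0 < log n := log_pos (by exact_mod_cast h2)
  rw [norm_of_nonneg (by positivity), norm_of_nonneg (by positivity), div_le_iff₀ hlogn]
  rw [norm_of_nonneg (log_nonneg (by linarith)), norm_of_nonneg (by positivity)] at hn
  have hcheb := (div_le_iff₀ hlogn).1 (Chebyshev.pi_ge n)
  have := mul_le_mul_of_nonneg_left hn1 hc.le
  linarith

theorem isLittleO_log_pow_div_log (k : ℕ) :
    (fun x : ℝ => log x ^ k) =o[atTop] fun x => x / log x := by
  rw [← isLittleO_mul_iff_isLittleO_div]
  · exact (isLittleO_pow_log_id_atTop (n := k + 1)).congr_left fun x => pow_succ' _ _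
  · filter_upwards [eventually_gt_atTop 1] with x hx using (log_pos hx).ne'

theorem isLittleO_log_pow_primeCounting (k : ℕ) :
    (fun n : ℕ => log n ^ k) =o[atTop] (fun n => (π n : ℝ)) :=
  ((isLittleO_log_pow_div_log k).comp_tendsto tendsto_natCast_atTop_atTop).trans_isBigO
    isBigO_div_log_primeCounting

theorem isLittleO_const_add_logb_sq_add_one_sq_primeCounting (q : ℕ) :
    (fun t : ℕ => (q : ℝ) + (logb q t ^ 2 + 1) ^ 2) =o[atTop] (fun n => (π n : ℝ)) := by
  have h k (c : ℝ) := (isLittleO_log_pow_primeCounting k).const_mul_left c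
  refine (((h 0 (q + 1)).add (h 2 (2 * (log q)⁻¹ ^ 2))).add (h 4 ((log q)⁻¹ ^ 4))).congr_left
    fun t => ?_
  simp only [logb, div_eq_mul_inv]
  ring

open scoped Classical in
/-- The set `G_t` of the paper. -/
noncomputable def largeOrderPrimes (q t : ℕ) : Finset ℕ :=
  {p ∈ primesLE t | q < p ∧ logb q t ^ 2 ≤ orderOf (q : ZMod p)}

theorem natCard_eq_card_largeOrderPrimes (q t : ℕ) :
    Nat.card {p : ℕ // p.Prime ∧ q < p ∧ p ≤ t ∧ logb q t ^ 2 ≤ (orderOf (q : ZMod p) : ℝ)} =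
      #(largeOrderPrimes q t) := by
  rw [← Nat.card_eq_finsetCard]
  exact Nat.card_congr <| Equiv.subtypeEquivRight fun p => by
    simp only [largeOrderPrimes, mem_filter, mem_primesLE]
    tauto

theorem card_largeOrderPrimes_le_primeCounting (q t : ℕ) : #(largeOrderPrimes q t) ≤ π t :=
  primesLE_card_eq_primeCounting t ▸ card_filter_le _ _

theorem primeCounting_le_card_largeOrderPrimes_add {q : ℕ} (hq : 2 ≤ q) (t : ℕ) :
    (π t : ℝ) ≤ #(largeOrderPrimes q t) + (q + (logb q t ^ 2 + 1) ^ 2) := by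
  set K := ⌈logb q t ^ 2⌉₊
  set bad := {p ∈ primesLE t | q < p ∧ orderOf (q : ZMod p) < K}
  have hsub : primesLE t ⊆ largeOrderPrimes q t ∪ primesLE q ∪ bad := by
    intro p hp
    simp only [largeOrderPrimes, bad, K, mem_union, mem_filter, mem_primesLE, Nat.lt_ceil] at hp ⊢
    by_cases hqp : q < p
    · by_cases hord : logb q t ^ 2 ≤ orderOf (q : ZMod p)
      · exact .inl (.inl ⟨hp, hqp, hord⟩)
      · exact .inr ⟨hp, hqp, not_le.1 hord⟩
    · exact .inl (.inr ⟨not_lt.1 hqp, hp.2⟩)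
  have hbad : #bad ≤ K ^ 2 := card_le_sq_of_orderOf_lt hq fun p hp => by
    simp only [bad, mem_filter, mem_primesLE] at hp
    exact ⟨hp.1.2, hp.2⟩
  have hsmall : #(primesLE q) ≤ q :=
    primesLE_eq_filter_Icc_one q ▸ (card_filter_le _ _).trans (by simp)
  have hK : (K : ℝ) ≤ logb q t ^ 2 + 1 := (Nat.ceil_lt_add_one (by positivity)).le
  have hcount : π t ≤ #(largeOrderPrimes q t) + q + K ^ 2 := calc
    π t = #(primesLE t) := (primesLE_card_eq_primeCounting t).symm
    _ ≤ #(largeOrderPrimes q t) + #(primesLE q) + #bad :=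
      (card_le_card hsub).trans <| (card_union_le _ _).trans <|
        Nat.add_le_add_right (card_union_le _ _) _
    _ ≤ _ := by omega
  calc (π t : ℝ) ≤ #(largeOrderPrimes q t) + q + (K : ℝ) ^ 2 := by exact_mod_cast hcount
    _ ≤ _ := by rw [add_assoc]; gcongr

/-- Let `q ≥ 2`. Define `G_t` to be the set of primes `p` with `q < p ≤ t` whose
multiplicative order of `q` mod `p` is at least `(log_q t)²`, and let `π(t)` be the prime
counting function. Then `lim_{t→∞} |G_t|/π(t) = 1`. -/
theorem density_of_primes_with_large_order (q : ℕ) (hq : 2 ≤ q) :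
    Filter.Tendsto
      (fun t : ℕ =>
        (Nat.card {p : ℕ // p.Prime ∧ q < p ∧ p ≤ t ∧
            (Real.logb q t) ^ 2 ≤ (orderOf (q : ZMod p) : ℝ)} : ℝ) /
          (Nat.primeCounting t : ℝ))
      Filter.atTop (nhds 1) := by
  simp only [natCard_eq_card_largeOrderPrimes]
  have hlower := tendsto_const_nhds (x := (1 : ℝ)).sub
    (isLittleO_const_add_logb_sq_add_one_sq_primeCounting q).tendsto_div_nhds_zero
  rw [sub_zero] at hlower
  refine tendsto_of_tendsto_of_tendsto_of_le_of_le' hlower tendsto_const_nhds ?_ ?_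
  · filter_upwards [eventually_ge_atTop 2] with t ht
    have hπ : (0 : ℝ) < π t := by
      exact_mod_cast Nat.pos_of_ne_zero (by rw [Ne, Nat.primeCounting_eq_zero_iff]; omega)
    rw [sub_le_iff_le_add, ← add_div, one_le_div hπ]
    exact primeCounting_le_card_largeOrderPrimes_add hq t
  · filter_upwards with t
    exact div_le_one_of_le₀ (mod_cast card_largeOrderPrimes_le_primeCounting q t) (by positivity)
end

section
/- Let F be a finite field with gcd(n,q)=1, H a cyclic group of odd order n, and e a primitive idempotent of FH with ē = e, where the bar map sends each group element to its inverse. If e ≠ e₀ := (1/n)∑_{x∈H}x, then the bar map restricts to an automorphism of order 2 of the field K = FHe, so the F-dimension of FHe is even and the fixed subfield F̃ = {a ∈ K : ā = a} satisfies [K : F̃] = 2. -/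
/-!
Since `e` is idempotent, `FH e ≅ FH ⧸ FH (1 - e)`, and primitivity of `e` makes this quotient a
field `K`. The bar map fixes `e`, so it preserves `FH e` and descends to an involution `σ` of `K`.
If `σ` were trivial, then `x e = x⁻¹ e` for every `x ∈ H`; as every element of a group of odd
order is a square, `x e = e` for all `x`, so `e` is a multiple of `∑ x` and idempotence forces
`e = e₀`. Hence `σ` has order `2`, and Artin's theorem gives `[K : K^σ] = 2`, so that
`dim_F K = 2 [K^σ : F]` and `|K| = |K^σ|²`.
-/

/-- The bar map on a group algebra, sending `∑ a_x x` to `∑ a_x x⁻¹`. -/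
noncomputable def MonoidAlgebra.bar {F G : Type*} [Semiring F] [Group G]
    (a : MonoidAlgebra F G) : MonoidAlgebra F G :=
  MonoidAlgebra.ofCoeff (Finsupp.equivMapDomain (Equiv.inv G) a.coeff)

theorem Ideal.Quotient.mk_span_singleton_one_sub_self {R : Type*} [CommRing R] (e : R) :
    Ideal.Quotient.mk (Ideal.span {1 - e}) e = 1 := by
  rw [← map_one (Ideal.Quotient.mk _), Ideal.Quotient.eq]
  exact Ideal.mem_span_singleton.2 ⟨-1, by ring⟩

theorem Ideal.map_span_singleton_of_apply_eq {R : Type*} [Semiring R] {F : Type*} [FunLike F R R]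
    [RingHomClass F R R] (φ : F) {x : R} (hx : φ x = x) :
    (Ideal.span {x}).map φ = Ideal.span {x} := by
  rw [Ideal.map_span, Set.image_singleton, hx]

theorem Ideal.apply_mem_span_singleton_of_apply_eq {R : Type*} [Semiring R] {F : Type*}
    [FunLike F R R] [RingHomClass F R R] (φ : F) {x a : R} (hx : φ x = x)
    (ha : a ∈ Ideal.span {x}) :
    φ a ∈ Ideal.span {x} :=
  Ideal.map_span_singleton_of_apply_eq φ hx ▸ Ideal.mem_map_of_mem φ ha

namespace IsIdempotentElem

variable {R : Type*} [CommRing R] {e : R}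

theorem mem_span_singleton_one_sub_iff (he : IsIdempotentElem e) {x : R} :
    x ∈ Ideal.span {1 - e} ↔ e * x = 0 := by
  rw [Ideal.mem_span_singleton']
  constructor
  · rintro ⟨d, rfl⟩
    rw [mul_left_comm, he.mul_one_sub_self, mul_zero]
  · exact fun h ↦ ⟨x, by rw [mul_one_sub, mul_comm, h, sub_zero]⟩

theorem isMaximal_span_singleton_one_sub (he : IsIdempotentElem e)
    (hatom : IsAtom (Ideal.span {e})) : (Ideal.span {1 - e}).IsMaximal := by
  rw [Ideal.isMaximal_iff, he.mem_span_singleton_one_sub_iff, mul_one]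
  refine ⟨fun h ↦ hatom.1 (Ideal.span_singleton_eq_bot.2 h), fun J x hJ hx hxJ ↦ ?_⟩
  rw [he.mem_span_singleton_one_sub_iff] at hx
  have hspan : Ideal.span {e * x} = Ideal.span {e} :=
    (hatom.le_iff.1 (Ideal.span_singleton_le_span_singleton.2 (dvd_mul_right e x))).resolve_left
      (by rwa [Ideal.span_singleton_eq_bot])
  have heJ : e ∈ J := by
    rw [← Ideal.span_singleton_le_iff_mem, ← hspan, Ideal.span_singleton_le_iff_mem]
    exact J.mul_mem_left e hxJ
  simpa using J.add_mem heJ (hJ (Ideal.mem_span_singleton_self _))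

theorem mul_eq_self_of_mem_span_singleton (he : IsIdempotentElem e) {x : R}
    (hx : x ∈ Ideal.span {e}) : e * x = x := by
  obtain ⟨c, rfl⟩ := Ideal.mem_span_singleton'.1 hx
  rw [mul_left_comm, he.eq]

noncomputable def spanSingletonEquivQuotient (he : IsIdempotentElem e) :
    Ideal.span {e} ≃ₗ[R] R ⧸ Ideal.span {1 - e} :=
  LinearEquiv.ofBijective ((Ideal.span {1 - e}).mkQ ∘ₗ (Ideal.span {e}).subtype) <| by
    refine ⟨LinearMap.ker_eq_bot.1 <| (Submodule.eq_bot_iff _).2 fun ⟨x, hx⟩ hker ↦ ?_,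
      fun y ↦ ?_⟩
    · have hx₀ : e * x = 0 := by
        rwa [← he.mem_span_singleton_one_sub_iff, ← Ideal.Quotient.eq_zero_iff_mem]
      rw [he.mul_eq_self_of_mem_span_singleton hx] at hx₀
      exact Subtype.ext hx₀
    · obtain ⟨x, rfl⟩ := Submodule.mkQ_surjective _ y
      refine ⟨⟨e * x, Ideal.mul_mem_right _ _ (Ideal.mem_span_singleton_self e)⟩, ?_⟩
      change Ideal.Quotient.mk _ (e * x) = Ideal.Quotient.mk _ x
      rw [map_mul, Ideal.Quotient.mk_span_singleton_one_sub_self, one_mul]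

end IsIdempotentElem

namespace MonoidAlgebra

@[simp]
theorem bar_bar {k G : Type*} [Semiring k] [Group G] (a : MonoidAlgebra k G) : a.bar.bar = a := by
  ext x
  simp [bar, Finsupp.equivMapDomain]

section CommGroup

variable (k G : Type*) [CommSemiring k] [CommGroup G]

noncomputable def barAlgEquiv : MonoidAlgebra k G ≃ₐ[k] MonoidAlgebra k G :=
  domCongr k k (MulEquiv.inv G)

variable {k G}

@[simp]
theorem barAlgEquiv_apply (a : MonoidAlgebra k G) : barAlgEquiv k G a = a.bar := by
  ext x
  simp [barAlgEquiv, bar, coeff_domCongr, Finsupp.equivMapDomain]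

theorem bar_mul (a b : MonoidAlgebra k G) : (a * b).bar = a.bar * b.bar := by
  simp only [← barAlgEquiv_apply, map_mul]

theorem bar_of (x : G) : (of k G x).bar = of k G x⁻¹ := by
  rw [← barAlgEquiv_apply, barAlgEquiv, of_apply, of_apply, domCongr_single]
  rfl

theorem of_mul_eq_self_of_bar_of_mul_eq (hodd : Odd (Nat.card G)) {a : MonoidAlgebra k G}
    (h : ∀ x, (of k G x * a).bar = of k G x * a) (x : G) : of k G x * a = a := by
  have hbar : a.bar = a := by simpa only [map_one, one_mul] using h 1
  have hinv (z : G) : of k G z * a = of k G z⁻¹ * a := by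
    rw [← h z, bar_mul, bar_of, hbar]
  obtain ⟨z, rfl⟩ := (powCoprime (Nat.coprime_two_right.2 hodd)).surjective x
  rw [powCoprime_apply, pow_two, map_mul, mul_assoc, hinv, ← mul_assoc, ← map_mul,
    mul_inv_cancel, map_one, one_mul]

end CommGroup

variable {k G : Type*} [Group G] [Fintype G]

theorem eq_coeff_one_smul_sum_of [Semiring k] {a : MonoidAlgebra k G}
    (h : ∀ x, of k G x * a = a) : a = a.coeff 1 • ∑ x, of k G x := by
  ext y
  have hsum : (∑ x, of k G x).coeff y = 1 := by
    simp [coeff_sum, coeff_single]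
  calc a.coeff y = (of k G y * a).coeff y := by rw [h]
    _ = a.coeff 1 := by rw [of_apply, coeff_single_mul_apply, inv_mul_cancel, one_mul]
    _ = (a.coeff 1 • ∑ x, of k G x).coeff y := by
      rw [coeff_smul, Finsupp.smul_apply, hsum, smul_eq_mul, mul_one]

theorem eq_inv_card_smul_sum_of [Field k] {e : MonoidAlgebra k G} (he : IsIdempotentElem e)
    (hne : e ≠ 0) (h : ∀ x, of k G x * e = e) :
    e = (Fintype.card G : k)⁻¹ • ∑ x, of k G x := by
  have hsum : (∑ x, of k G x) * e = Fintype.card G • e := by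
    simp only [Finset.sum_mul, h, Finset.sum_const, Finset.card_univ]
  have hc : e.coeff 1 * Fintype.card G = 1 := by
    refine smul_left_injective k hne ?_
    calc (e.coeff 1 * Fintype.card G) • e = e.coeff 1 • ((∑ x, of k G x) * e) := by
          rw [hsum, mul_smul, Nat.cast_smul_eq_nsmul]
      _ = e * e := by rw [← smul_mul_assoc, ← eq_coeff_one_smul_sum_of h]
      _ = (1 : k) • e := by rw [he.eq, one_smul]
  rw [eq_coeff_one_smul_sum_of h, eq_inv_of_mul_eq_one_left hc]

end MonoidAlgebra

namespace IntermediateField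

variable {F E : Type*} [Field F] [Field E] [Algebra F E]

theorem mem_fixedField_zpowers_iff (σ : E ≃ₐ[F] E) (x : E) :
    x ∈ fixedField (Subgroup.zpowers σ) ↔ σ x = x := by
  rw [mem_fixedField_iff, Subgroup.forall_mem_zpowers]
  exact MulAction.mem_fixedBy_zpowers_iff_mem_fixedBy (α := E) (g := σ)

variable [FiniteDimensional F E]

theorem finrank_fixedField_zpowers (σ : E ≃ₐ[F] E) :
    Module.finrank (fixedField (Subgroup.zpowers σ)) E = orderOf σ := by
  rw [finrank_fixedField_eq_card, Nat.card_zpowers]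

theorem finrank_eq_finrank_fixedField_zpowers_mul_orderOf (σ : E ≃ₐ[F] E) :
    Module.finrank F E = Module.finrank F (fixedField (Subgroup.zpowers σ)) * orderOf σ := by
  rw [← finrank_fixedField_zpowers, Module.finrank_mul_finrank]

theorem natCard_eq_natCard_fixedField_zpowers_pow_orderOf (σ : E ≃ₐ[F] E) :
    Nat.card E = Nat.card (fixedField (Subgroup.zpowers σ)) ^ orderOf σ := by
  rw [← finrank_fixedField_zpowers,
    Module.natCard_eq_pow_finrank (K := fixedField (Subgroup.zpowers σ))]

end IntermediateField

namespace IsIdempotentElem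

variable {F R : Type*} [Field F] [CommRing R] [Algebra F R] [FiniteDimensional F R] {e : R}

open IntermediateField in
theorem even_finrank_and_natCard_eq_sq (he : IsIdempotentElem e)
    (hmax : (Ideal.span {1 - e}).IsMaximal) (φ : R ≃ₐ[F] R) (hφe : φ e = e)
    (hφ : ∀ a, φ (φ a) = a) (hmoved : ∃ a ∈ Ideal.span {e}, φ a ≠ a) :
    Even (Module.finrank F (Submodule.restrictScalars F (Ideal.span {e}))) ∧
      Nat.card {a : R // a ∈ Ideal.span {e}} =
        Nat.card {a : R // a ∈ Ideal.span {e} ∧ φ a = a} ^ 2 := by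
  let _ : Field (R ⧸ Ideal.span {1 - e}) := Ideal.Quotient.field _
  let σ := Ideal.quotientEquivAlg (Ideal.span {1 - e}) _ φ
    (Ideal.map_span_singleton_of_apply_eq φ (by rw [map_sub, map_one, hφe])).symm
  let ψ := he.spanSingletonEquivQuotient
  have hψ (a : Ideal.span {e}) :
      σ (ψ a) = ψ ⟨φ a, Ideal.apply_mem_span_singleton_of_apply_eq φ hφe a.2⟩ := rfl
  have hfixed (a : Ideal.span {e}) : φ a = a ↔ ψ a ∈ fixedField (Subgroup.zpowers σ) := by
    rw [mem_fixedField_zpowers_iff, hψ, ψ.injective.eq_iff, Subtype.ext_iff]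
  have horder : orderOf σ = 2 := by
    refine orderOf_eq_prime (AlgEquiv.ext fun x ↦ ?_) fun h ↦ ?_
    · obtain ⟨a, rfl⟩ := Ideal.Quotient.mk_surjective x
      exact congrArg _ (hφ a)
    · obtain ⟨a, ha, hne⟩ := hmoved
      exact hne ((hfixed ⟨a, ha⟩).2 (by rw [mem_fixedField_zpowers_iff, h]; rfl))
  refine ⟨?_, ?_⟩
  · have hψF : Module.finrank F (Submodule.restrictScalars F (Ideal.span {e})) =
        Module.finrank F (R ⧸ Ideal.span {1 - e}) := (ψ.restrictScalars F).finrank_eq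
    rw [hψF, finrank_eq_finrank_fixedField_zpowers_mul_orderOf σ, horder]
    exact even_two.mul_left _
  · calc Nat.card {a : R // a ∈ Ideal.span {e}} = Nat.card (R ⧸ Ideal.span {1 - e}) :=
          Nat.card_congr ψ.toEquiv
      _ = Nat.card (fixedField (Subgroup.zpowers σ)) ^ 2 := by
          rw [natCard_eq_natCard_fixedField_zpowers_pow_orderOf σ, horder]
      _ = Nat.card {a : R // a ∈ Ideal.span {e} ∧ φ a = a} ^ 2 := by
          rw [Nat.card_congr ((Equiv.subtypeSubtypeEquivSubtypeInter _ _).symm.trans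
            (ψ.toEquiv.subtypeEquiv hfixed))]

end IsIdempotentElem

theorem bar_on_selfdual_primitive_idempotent_component_general
    (F : Type*) [Field F] (H : Type*) [CommGroup H] [Fintype H]
    (hodd : Odd (Fintype.card H))
    (e : MonoidAlgebra F H) (hidem : IsIdempotentElem e)
    (hprim : IsAtom (Ideal.span {e} : Ideal (MonoidAlgebra F H)))
    (hbar : MonoidAlgebra.bar e = e)
    (hne0 : e ≠ (Fintype.card H : F)⁻¹ • ∑ x : H, MonoidAlgebra.of F H x) :
    (∀ a ∈ Ideal.span {e}, MonoidAlgebra.bar a ∈ Ideal.span {e}) ∧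
    (∃ a ∈ Ideal.span {e}, MonoidAlgebra.bar a ≠ a) ∧
    Even (Module.finrank F
      (Submodule.restrictScalars F (Ideal.span {e} : Ideal (MonoidAlgebra F H)))) ∧
    Nat.card {a : MonoidAlgebra F H // a ∈ Ideal.span {e}} =
      (Nat.card {a : MonoidAlgebra F H //
          a ∈ Ideal.span {e} ∧ MonoidAlgebra.bar a = a}) ^ 2 := by
  have hbarAlg : MonoidAlgebra.barAlgEquiv F H e = e := by
    rwa [MonoidAlgebra.barAlgEquiv_apply]
  have hmoved : ∃ a ∈ Ideal.span {e}, MonoidAlgebra.bar a ≠ a := by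
    by_contra! hfixed
    have hfixed_of_mul (x : H) :
        MonoidAlgebra.bar (MonoidAlgebra.of F H x * e) = MonoidAlgebra.of F H x * e :=
      hfixed _ (Ideal.mul_mem_left _ _ (Ideal.mem_span_singleton_self e))
    exact hne0 <| MonoidAlgebra.eq_inv_card_smul_sum_of hidem
      (mt Ideal.span_singleton_eq_bot.2 hprim.1)
      (MonoidAlgebra.of_mul_eq_self_of_bar_of_mul_eq (by rwa [Nat.card_eq_fintype_card])
        hfixed_of_mul)
  have hcomponent := hidem.even_finrank_and_natCard_eq_sq
    (hidem.isMaximal_span_singleton_one_sub hprim) (MonoidAlgebra.barAlgEquiv F H) hbarAlg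
    (by simp) (by simpa using hmoved)
  simp only [MonoidAlgebra.barAlgEquiv_apply] at hcomponent
  exact ⟨fun a ha ↦ by simpa using Ideal.apply_mem_span_singleton_of_apply_eq _ hbarAlg ha,
    hmoved, hcomponent⟩

/-- Let `F` be a finite field, `H` a cyclic group of odd order `n` with `gcd(n,q) = 1`,
and `e ≠ e₀` a primitive idempotent of `FH` fixed by the bar map. Then the bar map
restricts to an automorphism of order `2` of the field `K = FHe`; consequently the
`F`-dimension of `FHe` is even, and the fixed subfield `F̃ = {a ∈ K : ā = a}` satisfies
`[K : F̃] = 2` (equivalently `|K| = |F̃|²`). -/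
theorem bar_on_selfdual_primitive_idempotent_component
    (F : Type*) [Field F] [Fintype F] (H : Type*) [CommGroup H] [Fintype H] [IsCyclic H]
    (hodd : Odd (Fintype.card H)) (hcoprime : ((Fintype.card H : F) ≠ 0))
    (e : MonoidAlgebra F H) (hidem : IsIdempotentElem e) (hne : e ≠ 0)
    (hprim : IsAtom (Ideal.span {e} : Ideal (MonoidAlgebra F H)))
    (hbar : MonoidAlgebra.bar e = e)
    (hne0 : e ≠ (Fintype.card H : F)⁻¹ • ∑ x : H, MonoidAlgebra.of F H x) :
    (∀ a ∈ Ideal.span {e}, MonoidAlgebra.bar a ∈ Ideal.span {e}) ∧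
    (∃ a ∈ Ideal.span {e}, MonoidAlgebra.bar a ≠ a) ∧
    Even (Module.finrank F
      (Submodule.restrictScalars F (Ideal.span {e} : Ideal (MonoidAlgebra F H)))) ∧
    Nat.card {a : MonoidAlgebra F H // a ∈ Ideal.span {e}} =
      (Nat.card {a : MonoidAlgebra F H //
          a ∈ Ideal.span {e} ∧ MonoidAlgebra.bar a = a}) ^ 2 :=
  bar_on_selfdual_primitive_idempotent_component_general F H hodd e hidem hprim hbar hne0
end
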